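/- For m > 0 let ν_m denote the Gaussian probability measure on ℝ with mean m and variance 2m. Then for every s ∈ (−1, 1): (i) ∫ tanh(x/2 + artanh(s)) dν_m(x) → s as m → 0⁺, and (ii) ∫ tanh(x/2 + artanh(s)) dν_m(x) → 1 as m → ∞. -/

import Mathlib

open Real Filter MeasureTheory ProbabilityTheory

/-- The inverse hyperbolic tangent: `_root_.artanh s = (1/2) ln((1 + s)/(1 − s))`,
so that `tanh (_root_.artanh s) = s` for `|s| < 1`. -/
noncomputable def artanh (s : ℝ) : ℝ := (1 / 2) * Real.log ((1 + s) / (1 - s))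

lemma abs_tanh_le_one' (x : ℝ) : |Real.tanh x| ≤ 1 := by
  rw [Real.tanh_eq_sinh_div_cosh, abs_div, abs_of_pos (Real.cosh_pos x),
    div_le_one (Real.cosh_pos x), abs_le]
  constructor <;>
    (rw [Real.sinh_eq, Real.cosh_eq] <;> nlinarith [Real.exp_pos x, Real.exp_pos (-x)])

lemma tanh_eq' (x : ℝ) :
    Real.tanh x = (1 - Real.exp (-(2 * x))) / (1 + Real.exp (-(2 * x))) := by
  rw [Real.tanh_eq_sinh_div_cosh, Real.sinh_eq, Real.cosh_eq]
  have h : Real.exp (-x) = Real.exp x * Real.exp (-(2 * x)) := by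
    rw [← Real.exp_add]; ring_nf
  have h1 : (0:ℝ) < Real.exp x := Real.exp_pos x
  have h2 : (0:ℝ) < 1 + Real.exp (-(2 * x)) := by positivity
  rw [h]
  field_simp

lemma tanh_artanh {s : ℝ} (hs : s ∈ Set.Ioo (-1 : ℝ) 1) : Real.tanh (_root_.artanh s) = s := by
  obtain ⟨h1, h2⟩ := hs
  have hB : (0:ℝ) < (1 - s) / (1 + s) := div_pos (by linarith) (by linarith)
  have key : -(2 * _root_.artanh s) = Real.log ((1 - s) / (1 + s)) := by
    have h : -(2 * _root_.artanh s) = - Real.log ((1 + s) / (1 - s)) := by rw [_root_.artanh]; ring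
    rw [h, ← Real.log_inv, inv_div]
  rw [tanh_eq', key, Real.exp_log hB]
  have hs1 : (1:ℝ) + s ≠ 0 := by linarith
  field_simp
  ring

lemma tanh_tendsto_atTop : Tendsto Real.tanh atTop (nhds 1) := by
  have h2 : Tendsto (fun x : ℝ => -(2 * x)) atTop atBot := by
    have : Tendsto (fun x : ℝ => 2 * x) atTop atTop :=
      tendsto_id.const_mul_atTop two_pos
    exact tendsto_neg_atTop_atBot.comp this
  have h : Tendsto (fun x : ℝ => Real.exp (-(2 * x))) atTop (nhds 0) :=
    Real.tendsto_exp_atBot.comp h2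
  have hnum : Tendsto (fun x : ℝ => 1 - Real.exp (-(2 * x))) atTop (nhds 1) := by
    simpa using ((tendsto_const_nhds (x := (1:ℝ)) (f := atTop)).sub h)
  have hden : Tendsto (fun x : ℝ => 1 + Real.exp (-(2 * x))) atTop (nhds 1) := by
    simpa using ((tendsto_const_nhds (x := (1:ℝ)) (f := atTop)).add h)
  have := hnum.div hden (by norm_num)
  have h' := this.congr (fun x => (tanh_eq' x).symm)
  simpa using h'  

lemma gauss_map (m : ℝ) (hm : 0 < m) :
    gaussianReal m (Real.toNNReal (2 * m)) =
      Measure.map (fun x => Real.sqrt (2 * m) * x + m) (gaussianReal 0 1) := by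
  have hc : Real.sqrt (2 * m) ^ 2 = 2 * m := Real.sq_sqrt (by linarith)
  have h1 : (fun x : ℝ => Real.sqrt (2 * m) * x + m)
      = (· + m) ∘ (fun x => Real.sqrt (2 * m) * x) := rfl
  rw [h1, ← Measure.map_map (measurable_add_const m) (measurable_const_mul _),
    gaussianReal_map_const_mul, gaussianReal_map_add_const]
  congr 1
  · simp
  · rw [← NNReal.coe_inj, NNReal.coe_mul, NNReal.coe_one, mul_one, NNReal.coe_mk, hc,
      Real.coe_toNNReal _ (by linarith)]

/-- Let `ν_m` be the Gaussian measure on `ℝ` with mean `m` and variance `2m`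
(the BAWGN channel `L`-density). For every `s ∈ (−1, 1)`:
`∫ tanh(x/2 + artanh s) dν_m(x) → s` as `m → 0⁺`, and
`∫ tanh(x/2 + artanh s) dν_m(x) → 1` as `m → ∞`. -/
theorem gauss_soft_bit_limits (s : ℝ) (hs : s ∈ Set.Ioo (-1 : ℝ) 1) :
    Tendsto (fun m : ℝ =>
        ∫ x, Real.tanh (x / 2 + _root_.artanh s) ∂(gaussianReal m (Real.toNNReal (2 * m))))
      (nhdsWithin 0 (Set.Ioi 0)) (nhds s) ∧
    Tendsto (fun m : ℝ =>
        ∫ x, Real.tanh (x / 2 + _root_.artanh s) ∂(gaussianReal m (Real.toNNReal (2 * m))))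
      atTop (nhds 1) := by
  set γ := gaussianReal 0 1 with hγ
  have hct : Continuous Real.tanh := by
    have h : Real.tanh = fun x => Real.sinh x / Real.cosh x :=
      funext Real.tanh_eq_sinh_div_cosh
    rw [h]
    exact Real.continuous_sinh.div Real.continuous_cosh fun x => (Real.cosh_pos x).ne'
  have hcontf : Continuous (fun x : ℝ => Real.tanh (x / 2 + _root_.artanh s)) := by
    exact hct.comp (by fun_prop)
  have hchange : ∀ m : ℝ, 0 < m →
      ∫ x, Real.tanh (x / 2 + _root_.artanh s) ∂(gaussianReal m (Real.toNNReal (2 * m)))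
        = ∫ x, Real.tanh ((Real.sqrt (2 * m) * x + m) / 2 + _root_.artanh s) ∂γ := by
    intro m hm
    rw [gauss_map m hm, integral_map (by fun_prop : Measurable (fun x : ℝ => Real.sqrt (2 * m) * x + m)).aemeasurable hcontf.aestronglyMeasurable]
  have hmeas : ∀ m : ℝ,
      AEStronglyMeasurable
        (fun x : ℝ => Real.tanh ((Real.sqrt (2 * m) * x + m) / 2 + _root_.artanh s)) γ := by
    intro m
    exact (hcontf.comp (by fun_prop)).aestronglyMeasurable
  have hbound : ∀ m : ℝ, ∀ᵐ x ∂γ,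
      ‖Real.tanh ((Real.sqrt (2 * m) * x + m) / 2 + _root_.artanh s)‖ ≤ (1:ℝ) := fun m =>
    Eventually.of_forall fun x => abs_tanh_le_one' _
  have hint1 : Integrable (fun _ : ℝ => (1:ℝ)) γ := integrable_const 1
  constructor
  · -- m → 0+
    have hlim : ∀ x : ℝ, Tendsto
        (fun m : ℝ => Real.tanh ((Real.sqrt (2 * m) * x + m) / 2 + _root_.artanh s))
        (nhdsWithin 0 (Set.Ioi 0)) (nhds s) := by
      intro x
      have harg : Tendsto (fun m : ℝ => (Real.sqrt (2 * m) * x + m) / 2 + _root_.artanh s)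
          (nhdsWithin 0 (Set.Ioi 0)) (nhds (_root_.artanh s)) := by
        have hsq : Tendsto (fun m : ℝ => Real.sqrt (2 * m)) (nhdsWithin 0 (Set.Ioi 0))
            (nhds 0) := by
          have hcs : Continuous (fun m : ℝ => Real.sqrt (2 * m)) :=
            Real.continuous_sqrt.comp (continuous_const.mul continuous_id)
          have := hcs.tendsto 0
          simp only [mul_zero, Real.sqrt_zero] at this
          exact this.mono_left nhdsWithin_le_nhds
        have hm0 : Tendsto (fun m : ℝ => m) (nhdsWithin 0 (Set.Ioi 0)) (nhds 0) :=
          tendsto_id.mono_left nhdsWithin_le_nhds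
        have := (((hsq.mul_const x).add hm0).div_const 2).add_const (_root_.artanh s)
        simpa using this
      have := (hct.tendsto (_root_.artanh s)).comp harg
      simpa [_root_.tanh_artanh hs, Function.comp_def] using this
    have key := tendsto_integral_filter_of_dominated_convergence (μ := γ)
      (F := fun m x => Real.tanh ((Real.sqrt (2 * m) * x + m) / 2 + _root_.artanh s))
      (f := fun _ => s) (fun _ => (1:ℝ))
      (Eventually.of_forall hmeas) (Eventually.of_forall hbound) hint1
      (Eventually.of_forall hlim)
    have hconst : ∫ _ : ℝ, s ∂γ = s := by simp
    rw [hconst] at key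
    refine key.congr' ?_
    filter_upwards [self_mem_nhdsWithin] with m hm
    exact (hchange m hm).symm
  · -- m → ∞
    have hlim : ∀ x : ℝ, Tendsto
        (fun m : ℝ => Real.tanh ((Real.sqrt (2 * m) * x + m) / 2 + _root_.artanh s))
        atTop (nhds 1) := by
      intro x
      have harg : Tendsto (fun m : ℝ => (Real.sqrt (2 * m) * x + m) / 2 + _root_.artanh s)
          atTop atTop := by
        apply tendsto_atTop_add_const_right
        apply Tendsto.atTop_div_const two_pos
        have hhalf : Tendsto (fun m : ℝ => m / 2) atTop atTop :=
          tendsto_id.atTop_div_const two_pos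
        apply tendsto_atTop_mono' atTop ?_ hhalf
        filter_upwards [eventually_ge_atTop (8 * x ^ 2 + 1)] with m hm
        have hm0 : (0:ℝ) < m := by nlinarith [sq_nonneg x]
        have h1 : Real.sqrt (2 * m) * |x| ≤ m / 2 := by
          have e1 : Real.sqrt (2 * m) * |x| = Real.sqrt (2 * m * x ^ 2) := by
            rw [← Real.sqrt_sq_eq_abs, ← Real.sqrt_mul (by linarith : (0:ℝ) ≤ 2 * m)]
          have e2 : m / 2 = Real.sqrt ((m / 2) ^ 2) := (Real.sqrt_sq (by linarith)).symm
          rw [e1, e2]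
          apply Real.sqrt_le_sqrt
          nlinarith [sq_nonneg x]
        have ha : -(Real.sqrt (2 * m) * |x|) ≤ Real.sqrt (2 * m) * x := by
          nlinarith [mul_le_mul_of_nonneg_left (neg_abs_le x) (Real.sqrt_nonneg (2 * m))]
        linarith
      exact tanh_tendsto_atTop.comp harg
    have key := tendsto_integral_filter_of_dominated_convergence (μ := γ)
      (F := fun m x => Real.tanh ((Real.sqrt (2 * m) * x + m) / 2 + _root_.artanh s))
      (f := fun _ => (1:ℝ)) (fun _ => (1:ℝ))
      (Eventually.of_forall hmeas) (Eventually.of_forall hbound) hint1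
      (Eventually.of_forall hlim)
    have hconst : ∫ _ : ℝ, (1:ℝ) ∂γ = 1 := by simp
    rw [hconst] at key
    refine key.congr' ?_
    filter_upwards [eventually_gt_atTop 0] with m hm
    exact (hchange m hm).symm
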